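/- For every ε > 0 there exist L > 0 and δ > 0 with the following property. Let H ⊂ R² be a hinge of angle α ≥ π − δ with vertex p, and let γ: [0,∞) → R² be one of the two rays bounding H (so γ(0) = p). Then for every s > 0 there exists a Jordan curve T_s ⊂ H with Jordan domain J_s such that: (1) T_s contains the initial segment γ([0,s]) of γ; (2) ℓ(T_s) ≤ L·s; (3) ℓ(T_s) − √(4π·H²(J_s)) < ε·s. -/

import Mathlib

noncomputable section

open Set Metric MeasureTheory
open scoped ENNReal NNReal Topology

namespace IsoCat

/-- The Euclidean plane. -/
abbrev E2 : Type := EuclideanSpace ℝ (Fin 2)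

/-- Euclidean three-space. -/
abbrev E3 : Type := EuclideanSpace ℝ (Fin 3)

/-- The unit circle `S¹ ⊆ ℝ²`. -/
def unitCircle : Set E2 := Metric.sphere 0 1

/-- The closed unit disc `D̄ ⊆ ℝ²`. -/
def closedDisc : Set E2 := Metric.closedBall 0 1

/-- The open unit disc `D ⊆ ℝ²`. -/
def openDisc : Set E2 := Metric.ball 0 1

/-- The closed half plane in `ℝ²`. -/
def halfPlane : Set E2 := {p : E2 | 0 ≤ p 0}

/-- The point of `ℝ²` with coordinates `(a, b)`. -/
def ePt (a b : ℝ) : E2 := WithLp.toLp 2 ![a, b]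

/-- The standard (arclength) parametrization of the unit circle. -/
def circlePt (t : ℝ) : ↥unitCircle :=
  ⟨ePt (Real.cos t) (Real.sin t), by
    have hn : ‖ePt (Real.cos t) (Real.sin t)‖ = 1 := by
      rw [EuclideanSpace.norm_eq, Fin.sum_univ_two]
      show Real.sqrt (‖Real.cos t‖ ^ 2 + ‖Real.sin t‖ ^ 2) = 1
      rw [Real.norm_eq_abs, Real.norm_eq_abs, sq_abs, sq_abs, Real.cos_sq_add_sin_sq,
        Real.sqrt_one]
    simpa [unitCircle, mem_sphere_iff_norm] using hn⟩

/-- The inclusion of the unit circle into the closed unit disc. -/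
def bdIncl : ↥unitCircle → ↥closedDisc := Set.inclusion Metric.sphere_subset_closedBall

variable {X : Type*}

/-- The total variation (length) of the restriction of the curve `γ` to the set `s`, with
respect to the distance function `ρ`, given by the supremum over all partitions of the sums of
distances of consecutive points.  (This is `eVariationOn` for a raw distance function.) -/
def rawVar (ρ : X → X → ℝ≥0∞) (γ : ℝ → X) (s : Set ℝ) : ℝ≥0∞ :=
  ⨆ p : ℕ × { u : ℕ → ℝ // Monotone u ∧ ∀ i, u i ∈ s },
    ∑ i ∈ Finset.range p.1, ρ (γ (p.2.1 (i + 1))) (γ (p.2.1 i))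

/-- The length of the closed curve `γ : S¹ → X` with respect to the distance function `ρ`. -/
def closedLen (ρ : X → X → ℝ≥0∞) (γ : ↥unitCircle → X) : ℝ≥0∞ :=
  rawVar ρ (fun t => γ (circlePt t)) (Icc 0 (2 * Real.pi))

/-- `u` is a Lipschitz map with respect to the distance function `ρ` on the target. -/
def IsLipMapW (ρ : X → X → ℝ≥0∞) {α : Type*} [PseudoEMetricSpace α] (u : α → X) : Prop :=
  ∃ K : ℝ≥0, ∀ a b : α, ρ (u a) (u b) ≤ (K : ℝ≥0∞) * edist a b

/-- The diameter of a set with respect to the distance function `ρ`. -/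
def rdiam (ρ : X → X → ℝ≥0∞) (s : Set X) : ℝ≥0∞ := ⨆ x ∈ s, ⨆ y ∈ s, ρ x y

/-- The `2`-dimensional Hausdorff measure of a set with respect to the distance function `ρ`,
normalized (by the factor `π/4`, the area of a disc of diameter one) so that it coincides with
the Lebesgue measure on the Euclidean plane. -/
def rmu2 (ρ : X → X → ℝ≥0∞) (S : Set X) : ℝ≥0∞ :=
  ⨆ (ε : ℝ≥0∞) (_ : 0 < ε),
    ⨅ (t : ℕ → Set X) (_ : S ⊆ ⋃ n, t n) (_ : ∀ n, rdiam ρ (t n) ≤ ε),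
      ∑' n, ENNReal.ofReal (Real.pi / 4) * rdiam ρ (t n) ^ 2

/-- The parametrized (Hausdorff) area of a map `u : D̄ → X`:  the integral `∫_X N(x) dH²(x)`
of the multiplicity function `N(x) = #u⁻¹(x)` against the `2`-dimensional Hausdorff measure,
here written via the layer-cake formula `∑_{k ≥ 1} H²({N ≥ k})`. -/
def rarea (ρ : X → X → ℝ≥0∞) (u : ↥closedDisc → X) : ℝ≥0∞ :=
  ∑' k : ℕ, rmu2 ρ {x : X | (k + 1 : ℕ∞) ≤ (u ⁻¹' {x}).encard}

/-- The distance function `ρ` is a (finite-valued) metric. -/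
structure IsMetricW (ρ : X → X → ℝ≥0∞) : Prop where
  finite : ∀ x y, ρ x y ≠ ⊤
  refl : ∀ x, ρ x x = 0
  symm : ∀ x y, ρ x y = ρ y x
  triangle : ∀ x y z, ρ x z ≤ ρ x y + ρ y z
  separates : ∀ x y, ρ x y = 0 → x = y

/-- `γ` restricted to `[a, b]` is a geodesic (an isometric embedding of the interval) with
respect to the distance function `ρ`. -/
def IsGeoW (ρ : X → X → ℝ≥0∞) (γ : ℝ → X) (a b : ℝ) : Prop :=
  ∀ s ∈ Icc a b, ∀ t ∈ Icc a b, ρ (γ s) (γ t) = ENNReal.ofReal |s - t|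

/-- Any two points are joined by a geodesic (with respect to `ρ`). -/
def GeodesicW (ρ : X → X → ℝ≥0∞) : Prop :=
  ∀ x y : X, ∃ L : ℝ, 0 ≤ L ∧ ∃ γ : ℝ → X, IsGeoW ρ γ 0 L ∧ γ 0 = x ∧ γ L = y

/-- Completeness with respect to the distance function `ρ`: every Cauchy sequence converges. -/
def CompleteW (ρ : X → X → ℝ≥0∞) : Prop :=
  ∀ u : ℕ → X,
    (∀ ε : ℝ≥0∞, 0 < ε → ∃ N : ℕ, ∀ m ≥ N, ∀ n ≥ N, ρ (u m) (u n) < ε) →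
    ∃ x : X, ∀ ε : ℝ≥0∞, 0 < ε → ∃ N : ℕ, ∀ n ≥ N, ρ (u n) x < ε

/-- A geodesic triangle with respect to the distance function `ρ`: three vertices `v i`
together with geodesic sides `side i` of lengths `L i` joining them pairwise. -/
structure TriW (ρ : X → X → ℝ≥0∞) where
  v : Fin 3 → X
  L : Fin 3 → ℝ
  side : Fin 3 → ℝ → X
  len_nonneg : ∀ i, 0 ≤ L i
  geo : ∀ i, IsGeoW ρ (side i) 0 (L i)
  src : ∀ i, side i 0 = v i
  tgt : ∀ i, side i (L i) = v (i + 1)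

/-- The point at arclength parameter `s` on the segment from `a` to `b` of length `d`. -/
def cmpPt (a b : E2) (d s : ℝ) : E2 := AffineMap.lineMap a b (s / d)

/-- The geodesic triangle `T` is thin: there is a Euclidean comparison triangle, with the same
side lengths, such that distances between points on the sides of `T` are bounded by the
distances between the corresponding points of the comparison triangle. -/
def TriW.Thin {ρ : X → X → ℝ≥0∞} (T : TriW ρ) : Prop :=
  ∃ w : Fin 3 → E2,
    (∀ i, dist (w i) (w (i + 1)) = T.L i) ∧
    ∀ i j : Fin 3, ∀ s ∈ Icc 0 (T.L i), ∀ t ∈ Icc 0 (T.L j),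
      ρ (T.side i s) (T.side j t) ≤
        edist (cmpPt (w i) (w (i + 1)) (T.L i) s) (cmpPt (w j) (w (j + 1)) (T.L j) t)

/-- `(X, ρ)` is a `CAT(0)` space: a complete geodesic metric space all of whose geodesic
triangles are thin. -/
def IsCAT0W (ρ : X → X → ℝ≥0∞) : Prop :=
  IsMetricW ρ ∧ CompleteW ρ ∧ GeodesicW ρ ∧ ∀ T : TriW ρ, T.Thin

/-- The restriction of the distance function `ρ` to a subset `A` (the induced metric). -/
def restrictW (ρ : X → X → ℝ≥0∞) (A : Set X) : ↥A → ↥A → ℝ≥0∞ := fun a b => ρ a b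

/-- `(X, ρ)` has non-positive curvature: every point has a neighborhood which, with the induced
metric, is a `CAT(0)` space. -/
def NonposCurvW (ρ : X → X → ℝ≥0∞) : Prop :=
  ∀ x : X, ∃ N : Set X,
    (∃ ε : ℝ≥0∞, 0 < ε ∧ {y | ρ x y < ε} ⊆ N) ∧ IsCAT0W (restrictW ρ N)

/-- The induced length distance associated with the distance function `ρ`: the infimum of the
lengths of continuous curves joining two given points. -/
def ILDW [TopologicalSpace X] (ρ : X → X → ℝ≥0∞) (x y : X) : ℝ≥0∞ :=
  ⨅ (γ : ℝ → X) (_ : ContinuousOn γ (Icc 0 1)) (_ : γ 0 = x) (_ : γ 1 = y),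
    rawVar ρ γ (Icc 0 1)

/-- The length of a Jordan curve (a subset homeomorphic to the circle) in a metric space,
computed via injective parametrizations. -/
def setLoopLen {Z : Type*} [MetricSpace Z] (η : Set Z) : ℝ≥0∞ :=
  ⨅ h : ↥unitCircle ≃ₜ ↥η,
    rawVar (fun a b : Z => edist a b) (fun t => (h (circlePt t) : Z)) (Icc 0 (2 * Real.pi))

/-- `X` satisfies the `δ`-isoperimetric inequality (with respect to `ρ`): every Lipschitz
closed curve of length at most `r` bounds a Lipschitz disc of parametrized area at most
`δ (r)`. -/
def SatisfiesIsopW (ρ : X → X → ℝ≥0∞) (δ : ℝ → ℝ≥0∞) : Prop :=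
  ∀ r : ℝ, 0 < r → ∀ γ : ↥unitCircle → X, IsLipMapW ρ γ → closedLen ρ γ ≤ ENNReal.ofReal r →
    ∃ u : ↥closedDisc → X, IsLipMapW ρ u ∧ (∀ t, u (bdIncl t) = γ t) ∧ rarea ρ u ≤ δ r

/-- The Dehn function of `(X, ρ)`: the (pointwise) infimum of all functions `δ` for which `X`
satisfies the `δ`-isoperimetric inequality. -/
def dehnW (ρ : X → X → ℝ≥0∞) : ℝ → ℝ≥0∞ :=
  fun r => ⨅ (δ : ℝ → ℝ≥0∞) (_ : SatisfiesIsopW ρ δ), δ r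

/-- `X` satisfies the Euclidean isoperimetric inequality for curves (with respect to `ρ`):
every Lipschitz closed curve `γ : S¹ → X` extends to a Lipschitz map `u : D̄ → X` whose
parametrized Hausdorff area is at most `ℓ(γ)² / 4π`. -/
def EuclIsopW (ρ : X → X → ℝ≥0∞) : Prop :=
  ∀ γ : ↥unitCircle → X, IsLipMapW ρ γ →
    ∃ u : ↥closedDisc → X, IsLipMapW ρ u ∧ (∀ t, u (bdIncl t) = γ t) ∧
      rarea ρ u ≤ closedLen ρ γ ^ 2 / ENNReal.ofReal (4 * Real.pi)


/-- The standard hinge (circular sector) of angle `α` in `ℝ²` with vertex at the origin. -/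
def sector (α : ℝ) : Set E2 :=
  {q : E2 | ∃ r θ : ℝ, 0 ≤ r ∧ 0 ≤ θ ∧ θ ≤ α ∧ q = ePt (r * Real.cos θ) (r * Real.sin θ)}

/-! Cut the disc of radius `R = s / (2 sin β)` along the chord `[0, s] × {0}`, choosing the
centre above the chord so that the circle meets the `x`-axis at angle `β`. The remaining cap
lies in the hinge of angle `π - β`. Its boundary, the long arc together with the chord, is the
image of the circle under the `1`-Lipschitz map folding the half plane below the chord onto it,
so it has length at most `2πR`; the discarded piece fits in a `2R sin β × R (1 - cos β)` box,
so the cap has area at least `πR² - 2R² sin³ β`. The isoperimetric deficit is therefore at most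
`2 s sin² β`, with `L = π / sin β`. -/

open Real

lemma ePt_apply_zero (a b : ℝ) : ePt a b 0 = a := rfl

lemma ePt_apply_one (a b : ℝ) : ePt a b 1 = b := rfl

lemma E2_ext {p q : E2} (h0 : p 0 = q 0) (h1 : p 1 = q 1) : p = q := by
  ext i
  fin_cases i <;> assumption

lemma dist_sq_eq (p q : E2) : dist p q ^ 2 = (p 0 - q 0) ^ 2 + (p 1 - q 1) ^ 2 := by
  rw [EuclideanSpace.dist_eq, Real.sq_sqrt (by positivity)]
  simp [Fin.sum_univ_two, Real.dist_eq, sq_abs]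

section Coordinates

variable {q c : E2} {R : ℝ}

lemma mem_closedBall_iff_sq (hR : 0 ≤ R) :
    q ∈ closedBall c R ↔ (q 0 - c 0) ^ 2 + (q 1 - c 1) ^ 2 ≤ R ^ 2 := by
  rw [mem_closedBall, ← dist_sq_eq, sq_le_sq₀ dist_nonneg hR]

lemma mem_ball_iff_sq (hR : 0 ≤ R) :
    q ∈ ball c R ↔ (q 0 - c 0) ^ 2 + (q 1 - c 1) ^ 2 < R ^ 2 := by
  rw [mem_ball, ← dist_sq_eq, sq_lt_sq₀ dist_nonneg hR]

lemma mem_sphere_iff_sq (hR : 0 ≤ R) :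
    q ∈ sphere c R ↔ (q 0 - c 0) ^ 2 + (q 1 - c 1) ^ 2 = R ^ 2 := by
  rw [mem_sphere, ← dist_sq_eq, sq_eq_sq₀ dist_nonneg hR]

end Coordinates

def foldAt (h : ℝ) (q : E2) : E2 := ePt (q 0) (max (q 1) h)

def closedCap (c : E2) (R h : ℝ) : Set E2 := closedBall c R ∩ {q | h ≤ q 1}

def openCap (c : E2) (R h : ℝ) : Set E2 := ball c R ∩ {q | h < q 1}

/-- An arc of the circle `sphere c R` together with its chord on the line `y = h`. -/
def capCurve (c : E2) (R h : ℝ) : Set E2 := closedCap c R h \ openCap c R h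

lemma lipschitzWith_foldAt (h : ℝ) : LipschitzWith 1 (foldAt h) := by
  refine LipschitzWith.of_dist_le_mul fun p q => ?_
  rw [NNReal.coe_one, one_mul]
  refine (sq_le_sq₀ dist_nonneg dist_nonneg).1 ?_
  rw [dist_sq_eq, dist_sq_eq]
  simp only [foldAt, ePt_apply_zero, ePt_apply_one]
  have := abs_max_sub_max_le_abs (p 1) (q 1) h
  nlinarith [abs_nonneg (max (p 1) h - max (q 1) h), sq_abs (max (p 1) h - max (q 1) h),
    sq_abs (p 1 - q 1)]

section Fold

variable {c : E2} {R h : ℝ}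

lemma mapsTo_foldAt_sphere (hR : 0 ≤ R) (hh : h ≤ c 1) :
    MapsTo (foldAt h) (sphere c R) (capCurve c R h) := by
  intro q hq
  rw [mem_sphere_iff_sq hR] at hq
  simp only [capCurve, closedCap, openCap, mem_sdiff, mem_inter_iff, mem_ofPred_eq,
    mem_closedBall_iff_sq hR, mem_ball_iff_sq hR, foldAt, ePt_apply_zero, ePt_apply_one, not_and,
    not_lt]
  rcases le_total h (q 1) with hq1 | hq1
  · rw [max_eq_left hq1]
    exact ⟨⟨hq.le, hq1⟩, fun hlt => absurd hq hlt.ne⟩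
  · rw [max_eq_right hq1]
    refine ⟨⟨?_, le_rfl⟩, fun _ => le_rfl⟩
    nlinarith

lemma injOn_foldAt_sphere (hR : 0 ≤ R) (hh : h ≤ c 1) : InjOn (foldAt h) (sphere c R) := by
  intro p hp q hq hpq
  rw [mem_sphere_iff_sq hR] at hp hq
  have h0 : p 0 = q 0 := by simpa [foldAt, ePt_apply_zero] using congrArg (· 0) hpq
  have h1 : max (p 1) h = max (q 1) h := by simpa [foldAt, ePt_apply_one] using congrArg (· 1) hpq
  refine E2_ext h0 ?_
  -- two points of the circle with the same abscissa are mirror images in `y = c 1`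
  have hsym : (p 1 - c 1) ^ 2 = (q 1 - c 1) ^ 2 := by rw [h0] at hp; linarith
  rcases le_total h (p 1) with hp1 | hp1 <;> rcases le_total h (q 1) with hq1 | hq1
  · rwa [max_eq_left hp1, max_eq_left hq1] at h1
  · rw [max_eq_left hp1, max_eq_right hq1] at h1
    nlinarith
  · rw [max_eq_right hp1, max_eq_left hq1] at h1
    nlinarith
  · nlinarith

lemma surjOn_foldAt_sphere (hR : 0 ≤ R) (hh : h ≤ c 1) :
    SurjOn (foldAt h) (sphere c R) (capCurve c R h) := by
  rintro t ⟨⟨htK, ht1⟩, htU⟩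
  simp only [mem_ofPred_eq] at ht1
  rw [mem_closedBall_iff_sq hR] at htK
  by_cases htB : t ∈ ball c R
  · -- `t` lies on the chord; it is the image of the point of the circle below it
    have ht1' : t 1 = h := le_antisymm (not_lt.1 fun hlt => htU ⟨htB, hlt⟩) ht1
    set w := √(R ^ 2 - (t 0 - c 0) ^ 2)
    have hw : w ^ 2 = R ^ 2 - (t 0 - c 0) ^ 2 := Real.sq_sqrt (by nlinarith)
    have hcw : c 1 - h ≤ w := Real.le_sqrt_of_sq_le (by nlinarith)
    refine ⟨ePt (t 0) (c 1 - w), ?_, E2_ext rfl ?_⟩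
    · rw [mem_sphere_iff_sq hR, ePt_apply_zero, ePt_apply_one]
      nlinarith
    · simp only [foldAt, ePt_apply_zero, ePt_apply_one]
      rw [max_eq_right (by linarith), ht1']
  · refine ⟨t, ?_, E2_ext rfl ?_⟩
    · rw [mem_ball_iff_sq hR, not_lt] at htB
      exact (mem_sphere_iff_sq hR).2 (le_antisymm htK htB)
    · exact max_eq_left ht1

lemma bijOn_foldAt_sphere (hR : 0 ≤ R) (hh : h ≤ c 1) :
    BijOn (foldAt h) (sphere c R) (capCurve c R h) :=
  ⟨mapsTo_foldAt_sphere hR hh, injOn_foldAt_sphere hR hh, surjOn_foldAt_sphere hR hh⟩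

end Fold

lemma lipschitzWith_circlePt : LipschitzWith 1 fun t => (circlePt t : E2) := by
  refine LipschitzWith.of_dist_le_mul fun a b => ?_
  rw [NNReal.coe_one, one_mul, Real.dist_eq]
  refine (sq_le_sq₀ dist_nonneg (abs_nonneg _)).1 ?_
  rw [dist_sq_eq, sq_abs]
  simp only [circlePt, ePt_apply_zero, ePt_apply_one]
  -- `|e^{ia} - e^{ib}|² = 2 - 2 cos (a - b) ≤ (a - b)²`
  nlinarith [cos_sub a b, sin_sq_add_cos_sq a, sin_sq_add_cos_sq b,
    one_sub_sq_div_two_le_cos (x := a - b)]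

lemma image_unitCircle_affine (c : E2) {R : ℝ} (hR : 0 < R) :
    (fun x => c + R • x) '' unitCircle = sphere c R := by
  ext y
  simp only [unitCircle, mem_image, mem_sphere_iff_norm, sub_zero]
  constructor
  · rintro ⟨x, hx, rfl⟩
    rw [add_sub_cancel_left, norm_smul, hx, mul_one, Real.norm_of_nonneg hR.le]
  · intro hy
    refine ⟨R⁻¹ • (y - c), ?_, ?_⟩
    · rw [norm_smul, hy, norm_inv, Real.norm_of_nonneg hR.le, inv_mul_cancel₀ hR.ne']
    · rw [smul_inv_smul₀ hR.ne', add_sub_cancel]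

lemma exists_homeomorph_of_bijOn {α β : Type*} [TopologicalSpace α] [TopologicalSpace β]
    [T2Space β] {f : α → β} {s : Set α} {t : Set β} (hs : IsCompact s)
    (hf : ContinuousOn f s) (hst : BijOn f s t) : ∃ e : s ≃ₜ t, ∀ x, (e x : β) = f x := by
  have := isCompact_iff_compactSpace.1 hs
  have hc : Continuous (hst.equiv f) := hf.mapsToRestrict hst.mapsTo
  exact ⟨hc.homeoOfEquivCompactToT2, fun x => rfl⟩

lemma setLoopLen_le_of_lipschitzWith {Z : Type*} [MetricSpace Z] {T : Set Z}
    (e : ↥unitCircle ≃ₜ ↥T) {K : ℝ≥0}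
    (hK : LipschitzWith K fun t => (e (circlePt t) : Z)) :
    setLoopLen T ≤ K * ENNReal.ofReal (2 * π) := by
  refine (iInf_le _ e).trans ?_
  have hid : eVariationOn id (Icc 0 (2 * π)) = ENNReal.ofReal (2 * π) := by simp
  calc eVariationOn ((fun t => (e (circlePt t) : Z)) ∘ id) (Icc 0 (2 * π))
      ≤ K * eVariationOn id (Icc 0 (2 * π)) :=
        (hK.lipschitzOnWith (s := univ)).comp_eVariationOn_le (mapsTo_univ _ _)
    _ = K * ENNReal.ofReal (2 * π) := by rw [hid]

lemma connectedComponentIn_compl_diff_eq {α : Type*} [TopologicalSpace α] {K U : Set α}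
    (hK : IsClosed K) (hU : IsOpen U) (hUc : IsPreconnected U) (hUK : U ⊆ K) {x : α}
    (hx : x ∈ U) : connectedComponentIn (K \ U)ᶜ x = U := by
  have hUT : U ⊆ (K \ U)ᶜ := fun y hy hy' => hy'.2 hy
  refine subset_antisymm ?_ (hUc.subset_connectedComponentIn hx hUT)
  -- the complement of `K \ U` is the disjoint union of the open sets `U` and `Kᶜ`
  refine isPreconnected_connectedComponentIn.subset_left_of_subset_union hU hK.isOpen_compl
    (disjoint_compl_right.mono_left hUK) ?_ ⟨x, mem_connectedComponentIn (hUT hx), hx⟩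
  rw [sdiff_eq, compl_inter, compl_compl, union_comm]
  exact connectedComponentIn_subset _ _

section Cap

variable {c : E2} {R h : ℝ}

lemma isClosed_closedCap : IsClosed (closedCap c R h) :=
  isClosed_closedBall.inter (isClosed_le continuous_const (EuclideanSpace.proj 1).continuous)

lemma isOpen_openCap : IsOpen (openCap c R h) :=
  isOpen_ball.inter (isOpen_lt continuous_const (EuclideanSpace.proj 1).continuous)

lemma convex_openCap : Convex ℝ (openCap c R h) :=
  (convex_ball c R).inter (convex_halfSpace_gt (EuclideanSpace.proj 1).isLinear h)

lemma openCap_subset_closedCap : openCap c R h ⊆ closedCap c R h :=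
  inter_subset_inter ball_subset_closedBall fun _ (hq : h < _) => hq.le

lemma connectedComponentIn_compl_capCurve {x : E2} (hx : x ∈ openCap c R h) :
    connectedComponentIn (capCurve c R h)ᶜ x = openCap c R h :=
  connectedComponentIn_compl_diff_eq isClosed_closedCap isOpen_openCap
    convex_openCap.isPreconnected openCap_subset_closedCap hx

lemma exists_homeomorph_capCurve (hR : 0 < R) (hh : h ≤ c 1) :
    ∃ e : ↥unitCircle ≃ₜ ↥(capCurve c R h),
      ∀ x, (e x : E2) = foldAt h (c + R • (x : E2)) := by
  have hbij : BijOn (fun x : E2 => foldAt h (c + R • x)) unitCircle (capCurve c R h) := by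
    refine (bijOn_foldAt_sphere hR.le hh).comp ?_
    rw [← image_unitCircle_affine c hR]
    exact ((add_right_injective c).comp (smul_right_injective E2 hR.ne')).injOn.bijOn_image
  have hcont : Continuous fun x : E2 => foldAt h (c + R • x) :=
    (lipschitzWith_foldAt h).continuous.comp (by fun_prop)
  exact exists_homeomorph_of_bijOn (isCompact_sphere 0 1) hcont.continuousOn hbij

end Cap

section CapMeasure

variable {c : E2} {R h : ℝ}

lemma setLoopLen_capCurve_le (hR : 0 < R) (hh : h ≤ c 1) :
    setLoopLen (capCurve c R h) ≤ ENNReal.ofReal (2 * π * R) := by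
  obtain ⟨e, he⟩ := exists_homeomorph_capCurve hR hh
  have hK : LipschitzWith (1 * (1 * (‖R‖₊ * 1))) fun t => (e (circlePt t) : E2) := by
    simp_rw [he]
    exact (lipschitzWith_foldAt h).comp
      ((isometry_add_left c).lipschitz.comp ((lipschitzWith_smul R).comp lipschitzWith_circlePt))
  refine (setLoopLen_le_of_lipschitzWith e hK).trans_eq ?_
  rw [one_mul, one_mul, mul_one, ← ENNReal.ofReal_coe_nnreal, coe_nnnorm,
    Real.norm_of_nonneg hR.le, ← ENNReal.ofReal_mul hR.le, mul_comm]

/-- The part of the disc below a chord at distance `b` from the centre and of half-length `a`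
fits in a `2a × (R - b)` box. -/
lemma volume_ball_inter_below_le {a b : ℝ} (ha : 0 ≤ a) (hb : 0 ≤ b)
    (hab : a ^ 2 + b ^ 2 = R ^ 2) :
    volume (ball c R ∩ {q | q 1 ≤ c 1 - b}) ≤ ENNReal.ofReal (2 * a * (R - b)) := by
  have hsub : ball c R ∩ {q | q 1 ≤ c 1 - b} ⊆
      (MeasurableEquiv.toLp 2 (Fin 2 → ℝ)).symm ⁻¹'
        Icc ![c 0 - a, c 1 - R] ![c 0 + a, c 1 - b] := by
    rintro q ⟨hq, hq1 : q 1 ≤ c 1 - b⟩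
    have hR := pos_of_mem_ball hq
    rw [mem_ball_iff_sq hR.le] at hq
    have hbq : b ^ 2 ≤ (q 1 - c 1) ^ 2 := by
      nlinarith [pow_le_pow_left₀ hb (by linarith : b ≤ c 1 - q 1) 2]
    have h0 := abs_le_of_sq_le_sq' (by nlinarith : (q 0 - c 0) ^ 2 ≤ a ^ 2) ha
    have h1 : c 1 - R ≤ q 1 := by nlinarith
    refine ⟨fun i => ?_, fun i => ?_⟩ <;> fin_cases i <;>
      simp only [Fin.zero_eta, Fin.mk_one, Fin.isValue, Matrix.cons_val_zero, Matrix.cons_val_one,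
        Matrix.cons_val_fin_one, MeasurableEquiv.toLp_symm_apply] <;> linarith
  calc volume (ball c R ∩ {q | q 1 ≤ c 1 - b})
      ≤ volume ((MeasurableEquiv.toLp 2 (Fin 2 → ℝ)).symm ⁻¹'
          Icc ![c 0 - a, c 1 - R] ![c 0 + a, c 1 - b]) := measure_mono hsub
    _ = volume (Icc ![c 0 - a, c 1 - R] ![c 0 + a, c 1 - b]) :=
        (EuclideanSpace.volume_preserving_symm_measurableEquiv_toLp
          (Fin 2)).measure_preimage_equiv _
    _ ≤ ENNReal.ofReal (2 * a * (R - b)) := by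
        rw [Real.volume_Icc_pi, Fin.prod_univ_two]
        simp only [Matrix.cons_val_zero, Matrix.cons_val_one]
        rw [← ENNReal.ofReal_mul (by linarith)]
        exact ENNReal.ofReal_le_ofReal (le_of_eq (by ring))

lemma volume_openCap_ge {a b : ℝ} (hR : 0 ≤ R) (ha : 0 ≤ a) (hb : 0 ≤ b)
    (hab : a ^ 2 + b ^ 2 = R ^ 2) :
    ENNReal.ofReal (π * R ^ 2 - 2 * a * (R - b)) ≤ volume (openCap c R (c 1 - b)) := by
  have hcover : ball c R ⊆ openCap c R (c 1 - b) ∪ (ball c R ∩ {q | q 1 ≤ c 1 - b}) := by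
    intro q hq
    rcases lt_or_ge (c 1 - b) (q 1) with h | h
    · exact Or.inl ⟨hq, h⟩
    · exact Or.inr ⟨hq, h⟩
  have hball : ENNReal.ofReal (π * R ^ 2) ≤
      volume (openCap c R (c 1 - b)) + ENNReal.ofReal (2 * a * (R - b)) := by
    calc ENNReal.ofReal (π * R ^ 2) = volume (ball c R) := by
          rw [EuclideanSpace.volume_ball_fin_two, ← ENNReal.ofReal_pow hR,
            ← ENNReal.ofReal_mul (by positivity), mul_comm]
      _ ≤ _ := (measure_mono hcover).trans (measure_union_le _ _)
      _ ≤ _ := by grw [volume_ball_inter_below_le ha hb hab]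
  have hbR : b ≤ R := (sq_le_sq₀ hb hR).1 (by nlinarith)
  rw [ENNReal.ofReal_sub _ (by positivity), tsub_le_iff_right]
  exact hball

end CapMeasure

lemma mem_sector_pi_sub {β : ℝ} {q : E2} (hβ0 : 0 < β) (hβ : β ≤ π / 2) (hq1 : 0 ≤ q 1)
    (hq : 0 ≤ q 0 * sin β + q 1 * cos β) : q ∈ sector (π - β) := by
  have hsin : 0 < sin β := sin_pos_of_pos_of_lt_pi hβ0 (by linarith [pi_pos])
  have hcos : 0 ≤ cos β := cos_nonneg_of_neg_pi_div_two_le_of_le (by linarith) hβ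
  obtain ⟨r, hr_nonneg, hr⟩ : ∃ r : ℝ, 0 ≤ r ∧ r ^ 2 = q 0 ^ 2 + q 1 ^ 2 :=
    ⟨_, Real.sqrt_nonneg _, Real.sq_sqrt (by positivity)⟩
  rcases hr_nonneg.eq_or_lt with hr0 | hr0
  · refine ⟨0, 0, le_rfl, le_rfl, by linarith [pi_pos], E2_ext ?_ ?_⟩ <;>
      simp only [ePt_apply_zero, ePt_apply_one, zero_mul] <;> nlinarith
  have hq0 := abs_le_of_sq_le_sq' (by nlinarith : q 0 ^ 2 ≤ r ^ 2) hr0.le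
  have hx : -1 ≤ q 0 / r ∧ q 0 / r ≤ 1 :=
    ⟨by rw [le_div_iff₀ hr0]; linarith, by rw [div_le_iff₀ hr0]; linarith⟩
  have hsinθ : sin (arccos (q 0 / r)) = q 1 / r := by
    rw [sin_arccos, show 1 - (q 0 / r) ^ 2 = (q 1 / r) ^ 2 by field_simp; linarith,
      Real.sqrt_sq (by positivity)]
  have hangle : -cos β ≤ q 0 / r := by
    rw [le_div_iff₀ hr0]
    by_contra! hlt
    have hq0sq : r ^ 2 * cos β ^ 2 < q 0 ^ 2 := by nlinarith [mul_nonneg hr0.le hcos]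
    have hq1sq : q 1 ^ 2 < (r * sin β) ^ 2 := by nlinarith [sin_sq_add_cos_sq β]
    have hq1lt : q 1 < r * sin β := lt_of_pow_lt_pow_left₀ 2 (by positivity) hq1sq
    nlinarith [mul_lt_mul_of_pos_right hlt hsin, mul_le_mul_of_nonneg_right hq1lt.le hcos]
  refine ⟨r, arccos (q 0 / r), hr0.le, arccos_nonneg _, ?_, E2_ext ?_ ?_⟩
  · calc arccos (q 0 / r) ≤ arccos (cos (π - β)) := by
          rw [cos_pi_sub]
          exact arccos_le_arccos hangle
      _ = π - β := arccos_cos (by linarith [pi_pos]) (by linarith)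
  · rw [ePt_apply_zero, cos_arccos hx.1 hx.2]
    field_simp
  · rw [ePt_apply_one, hsinθ]
    field_simp

lemma closedCap_subset_sector {β R : ℝ} (hβ0 : 0 < β) (hβ : β ≤ π / 2) (hR : 0 ≤ R) :
    closedCap (ePt (R * sin β) (R * cos β)) R 0 ⊆ sector (π - β) := by
  rintro q ⟨hqB, hq1 : 0 ≤ q 1⟩
  rw [mem_closedBall_iff_sq hR, ePt_apply_zero, ePt_apply_one] at hqB
  refine mem_sector_pi_sub hβ0 hβ hq1 ?_
  by_contra! hneg
  have hsq : q 0 ^ 2 + q 1 ^ 2 ≤ 0 := by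
    nlinarith [sin_sq_add_cos_sq β, mul_nonpos_of_nonneg_of_nonpos hR hneg.le]
  have h0 : q 0 = 0 := by nlinarith [sq_nonneg (q 0), sq_nonneg (q 1)]
  have h1 : q 1 = 0 := by nlinarith [sq_nonneg (q 0), sq_nonneg (q 1)]
  simp [h0, h1] at hneg

lemma ePt_mem_capCurve {c : E2} {R h t : ℝ} (hR : 0 ≤ R)
    (ht : (t - c 0) ^ 2 + (h - c 1) ^ 2 ≤ R ^ 2) : ePt t h ∈ capCurve c R h :=
  ⟨⟨(mem_closedBall_iff_sq hR).2 ht, (le_refl h : h ≤ ePt t h 1)⟩,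
    fun hU => lt_irrefl h hU.2⟩

def IsJordanCurveWithDomain (T J : Set E2) : Prop :=
  Nonempty (↥unitCircle ≃ₜ ↥T) ∧ (∃ x ∈ Tᶜ, J = connectedComponentIn Tᶜ x) ∧
    Bornology.IsBounded J

lemma IsJordanCurveWithDomain.image {T J : Set E2} (hTJ : IsJordanCurveWithDomain T J)
    (ψ : E2 ≃ᵢ E2) : IsJordanCurveWithDomain (ψ '' T) (ψ '' J) := by
  obtain ⟨⟨e⟩, ⟨x, hx, rfl⟩, hJ⟩ := hTJ
  refine ⟨⟨e.trans (ψ.toHomeomorph.image T)⟩, ⟨ψ x, ?_, ?_⟩,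
    ψ.isometry.lipschitz.isBounded_image hJ⟩
  · rw [← image_compl_eq ψ.bijective]
    exact mem_image_of_mem _ hx
  · rw [← image_compl_eq ψ.bijective]
    simpa using ψ.toHomeomorph.image_connectedComponentIn hx

lemma setLoopLen_image_isometryEquiv_le (ψ : E2 ≃ᵢ E2) (T : Set E2) :
    setLoopLen (ψ '' T) ≤ setLoopLen T :=
  le_iInf fun e => iInf_le_of_le (e.trans (ψ.toHomeomorph.image T)) <| by
    have := (ψ.isometry.lipschitz.lipschitzOnWith (s := univ)).comp_eVariationOn_le
      (g := fun t => (e (circlePt t) : E2)) (s := Icc 0 (2 * π)) (mapsTo_univ _ _)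
    rwa [ENNReal.coe_one, one_mul] at this

lemma volume_image_isometryEquiv (ψ : E2 ≃ᵢ E2) (S : Set E2) :
    volume (ψ '' S) = volume S := by
  rw [← EuclideanSpace.euclideanHausdorffMeasure_eq_volume]
  exact ψ.isometry.euclideanHausdorffMeasure_image S

/-- The reflection in the line through `0` at angle `α / 2`: it swaps the two bounding rays of
`sector α`. -/
def sectorReflection (α : ℝ) (q : E2) : E2 :=
  ePt (q 0 * cos α + q 1 * sin α) (q 0 * sin α - q 1 * cos α)

lemma sectorReflection_involutive (α : ℝ) : Function.Involutive (sectorReflection α) := by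
  intro q
  refine E2_ext ?_ ?_ <;> simp only [sectorReflection, ePt_apply_zero, ePt_apply_one]
  · linear_combination q 0 * sin_sq_add_cos_sq α
  · linear_combination q 1 * sin_sq_add_cos_sq α

lemma isometry_sectorReflection (α : ℝ) : Isometry (sectorReflection α) :=
  Isometry.of_dist_eq fun p q => by
    refine (sq_eq_sq₀ dist_nonneg dist_nonneg).1 ?_
    rw [dist_sq_eq, dist_sq_eq]
    simp only [sectorReflection, ePt_apply_zero, ePt_apply_one]
    linear_combination ((p 0 - q 0) ^ 2 + (p 1 - q 1) ^ 2) * sin_sq_add_cos_sq α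

def sectorReflectionEquiv (α : ℝ) : E2 ≃ᵢ E2 :=
  ⟨(sectorReflection_involutive α).toPerm, isometry_sectorReflection α⟩

lemma sectorReflection_ray (α t : ℝ) :
    sectorReflection α (ePt t 0) = ePt (t * cos α) (t * sin α) :=
  E2_ext (by simp [sectorReflection, ePt_apply_zero, ePt_apply_one])
    (by simp [sectorReflection, ePt_apply_zero, ePt_apply_one])

lemma image_sectorReflection_sector_subset {α b : ℝ} (hbα : b ≤ α) :
    sectorReflection α '' sector b ⊆ sector α := by
  rintro _ ⟨_, ⟨r, θ, hr, hθ0, hθb, rfl⟩, rfl⟩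
  refine ⟨r, α - θ, hr, by linarith, by linarith, E2_ext ?_ ?_⟩ <;>
    simp only [sectorReflection, ePt_apply_zero, ePt_apply_one, cos_sub, sin_sub] <;> ring

lemma sector_mono {a b : ℝ} (hab : a ≤ b) : sector a ⊆ sector b := by
  rintro _ ⟨r, θ, hr, hθ0, hθa, rfl⟩
  exact ⟨r, θ, hr, hθ0, hθa.trans hab, rfl⟩

lemma exists_isometryEquiv_of_boundingRay {α b : ℝ} (hbα : b ≤ α) (φ : E2 ≃ᵢ E2)
    {γ : ℝ → E2} (hγ : (γ = fun s => φ (ePt s 0)) ∨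
      (γ = fun s => φ (ePt (s * cos α) (s * sin α)))) :
    ∃ ψ : E2 ≃ᵢ E2, ψ '' sector b ⊆ φ '' sector α ∧ ∀ t, γ t = ψ (ePt t 0) := by
  rcases hγ with rfl | rfl
  · exact ⟨φ, image_mono (sector_mono hbα), fun t => rfl⟩
  · refine ⟨(sectorReflectionEquiv α).trans φ, ?_, fun t => ?_⟩
    · rw [show ⇑((sectorReflectionEquiv α).trans φ) = φ ∘ sectorReflection α from rfl,
        image_comp]
      exact image_mono (image_sectorReflection_sector_subset hbα)
    · exact congrArg φ (sectorReflection_ray α t).symm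

lemma isJordanCurveWithDomain_capCurve {c : E2} {R h : ℝ} (hR : 0 < R) (hh : h ≤ c 1) :
    IsJordanCurveWithDomain (capCurve c R h) (openCap c R h) := by
  have hx : ePt (c 0) (c 1 + R / 2) ∈ openCap c R h := by
    refine ⟨(mem_ball_iff_sq hR.le).2 ?_, (by linarith : h < c 1 + R / 2)⟩
    simp only [ePt_apply_zero, ePt_apply_one]
    nlinarith
  obtain ⟨e, -⟩ := exists_homeomorph_capCurve hR hh
  exact ⟨⟨e⟩, ⟨_, fun hxT => hxT.2 hx, (connectedComponentIn_compl_capCurve hx).symm⟩,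
    isBounded_ball.subset inter_subset_left⟩

lemma ofReal_le_rpow_half_of_sq_le {x : ℝ} {V : ℝ≥0∞} (h : ENNReal.ofReal (x ^ 2) ≤ V) :
    ENNReal.ofReal x ≤ V ^ (1 / 2 : ℝ) := by
  rcases le_or_gt x 0 with hx | hx
  · simp [ENNReal.ofReal_of_nonpos hx]
  calc ENNReal.ofReal x = ENNReal.ofReal (x ^ 2) ^ (1 / 2 : ℝ) := by
        rw [ENNReal.ofReal_rpow_of_nonneg (by positivity) (by norm_num), ← Real.sqrt_eq_rpow,
          Real.sqrt_sq hx.le]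
    _ ≤ V ^ (1 / 2 : ℝ) := by gcongr

lemma setLoopLen_capCurve_lt {β ε R : ℝ} (hsin : 0 < sin β) (hcos : 0 ≤ cos β)
    (hε : 2 * sin β ^ 2 < ε) (hR : 0 < R) :
    setLoopLen (capCurve (ePt (R * sin β) (R * cos β)) R 0) <
      (ENNReal.ofReal (4 * π) * volume (openCap (ePt (R * sin β) (R * cos β)) R 0)) ^
        (1 / 2 : ℝ) + ENNReal.ofReal (ε * (2 * R * sin β)) := by
  set c : E2 := ePt (R * sin β) (R * cos β)
  have hpi := pi_gt_three
  have hsin3 : sin β ^ 3 ≤ 1 := pow_le_one₀ hsin.le (sin_le_one β)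
  have hvol : ENNReal.ofReal (π * R ^ 2 - 2 * (R * sin β) * (R - R * cos β))
      ≤ volume (openCap c R 0) := by
    simpa [c, ePt_apply_one] using volume_openCap_ge (c := c) hR.le (by positivity)
      (mul_nonneg hR.le hcos)
      (by nlinarith [sin_sq_add_cos_sq β] : (R * sin β) ^ 2 + (R * cos β) ^ 2 = R ^ 2)
  have hcap : 2 * (R * sin β) * (R - R * cos β) ≤ 2 * R ^ 2 * sin β ^ 3 := by
    have : 1 - cos β ≤ sin β ^ 2 := by nlinarith [sin_sq_add_cos_sq β, cos_le_one β]
    nlinarith [mul_le_mul_of_nonneg_left this (by positivity : 0 ≤ 2 * R ^ 2 * sin β)]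
  have hx0 : 0 ≤ 2 * π * R - 4 * R * sin β ^ 3 := by nlinarith
  have hdef : ENNReal.ofReal (2 * π * R - 4 * R * sin β ^ 3)
      ≤ (ENNReal.ofReal (4 * π) * volume (openCap c R 0)) ^ (1 / 2 : ℝ) := by
    refine ofReal_le_rpow_half_of_sq_le ?_
    calc ENNReal.ofReal ((2 * π * R - 4 * R * sin β ^ 3) ^ 2)
        ≤ ENNReal.ofReal (4 * π) * ENNReal.ofReal (π * R ^ 2 - 2 * R ^ 2 * sin β ^ 3) := by
          rw [← ENNReal.ofReal_mul (by positivity)]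
          refine ENNReal.ofReal_le_ofReal ?_
          nlinarith [mul_nonneg (by positivity : 0 ≤ 8 * R ^ 2 * sin β ^ 3)
            (by linarith : 0 ≤ π - 2 * sin β ^ 3)]
      _ ≤ _ := by grw [← hvol, hcap]
  calc setLoopLen (capCurve c R 0) ≤ ENNReal.ofReal (2 * π * R) :=
        setLoopLen_capCurve_le hR (mul_nonneg hR.le hcos)
    _ < ENNReal.ofReal (2 * π * R - 4 * R * sin β ^ 3) +
          ENNReal.ofReal (ε * (2 * R * sin β)) := by
        have hε0 : 0 < ε := by nlinarith
        rw [← ENNReal.ofReal_add hx0 (by positivity)]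
        refine (ENNReal.ofReal_lt_ofReal_iff (by positivity)).2 ?_
        nlinarith [mul_lt_mul_of_pos_left hε (by positivity : (0 : ℝ) < 2 * R * sin β)]
    _ ≤ _ := by gcongr

theorem exists_capCurve_almost_isoperimetric {β ε s : ℝ} (hβ0 : 0 < β) (hβ : β ≤ π / 2)
    (hε : 2 * sin β ^ 2 < ε) (hs : 0 < s) :
    ∃ T J : Set E2, T ⊆ sector (π - β) ∧ IsJordanCurveWithDomain T J ∧
      (fun t => ePt t 0) '' Icc 0 s ⊆ T ∧
      setLoopLen T ≤ ENNReal.ofReal (π / sin β * s) ∧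
      setLoopLen T <
        (ENNReal.ofReal (4 * π) * volume J) ^ (1 / 2 : ℝ) + ENNReal.ofReal (ε * s) := by
  have hsin : 0 < sin β := sin_pos_of_pos_of_lt_pi hβ0 (by linarith [pi_pos])
  have hcos : 0 ≤ cos β := cos_nonneg_of_neg_pi_div_two_le_of_le (by linarith) hβ
  -- the circle of radius `R` through `0` and `(s, 0)`, meeting the `x`-axis at angle `β`
  set R := s / (2 * sin β)
  have hR : 0 < R := by positivity
  have hsR : s = 2 * R * sin β := by simp only [R]; field_simp
  set c : E2 := ePt (R * sin β) (R * cos β)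
  have hc1 : (0 : ℝ) ≤ c 1 := mul_nonneg hR.le hcos
  refine ⟨capCurve c R 0, openCap c R 0,
    sdiff_subset.trans (closedCap_subset_sector hβ0 hβ hR.le),
    isJordanCurveWithDomain_capCurve hR hc1, ?_,
    (setLoopLen_capCurve_le hR hc1).trans_eq (congrArg ENNReal.ofReal ?_), ?_⟩
  · rintro _ ⟨t, ⟨ht0, hts⟩, rfl⟩
    refine ePt_mem_capCurve hR.le ?_
    simp only [c, ePt_apply_zero, ePt_apply_one]
    nlinarith [sin_sq_add_cos_sq β]
  · rw [hsR]
    field_simp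
  · rw [hsR]
    exact setLoopLen_capCurve_lt hsin hcos hε hR

/-- **Euclidean domains of almost isoperimetric equality.**
For every `ε > 0` there are `L > 0` and `δ > 0` with the following property.  Let `H ⊆ ℝ²` be
a hinge of angle `α ≥ π - δ` (with `α ≤ 2π`) with vertex `p`, and let `γ` be one of the two
rays bounding `H`.  Then for every `s > 0` there is a Jordan curve `T_s ⊆ H` with Jordan
domain `J_s` such that: (1) `T_s` contains the initial segment `γ([0,s])`;
(2) `ℓ(T_s) ≤ L·s`; (3) `ℓ(T_s) - √(4π·H²(J_s)) < ε·s`. -/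
theorem euclidean_hinge_almost_isoperimetric (ε : ℝ) (hε : 0 < ε) :
    ∃ L δ : ℝ, 0 < L ∧ 0 < δ ∧
      ∀ α : ℝ, Real.pi - δ ≤ α → α ≤ 2 * Real.pi →
      ∀ (φ : E2 ≃ᵢ E2) (γ : ℝ → E2),
        ((γ = fun s => φ (ePt s 0)) ∨
          (γ = fun s => φ (ePt (s * Real.cos α) (s * Real.sin α)))) →
        ∀ s : ℝ, 0 < s →
          ∃ T J : Set E2,
            T ⊆ φ '' sector α ∧
            Nonempty (↥unitCircle ≃ₜ ↥T) ∧
            (∃ x ∈ Tᶜ, J = connectedComponentIn Tᶜ x) ∧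
            Bornology.IsBounded J ∧
            γ '' Icc 0 s ⊆ T ∧
            setLoopLen T ≤ ENNReal.ofReal (L * s) ∧
            setLoopLen T <
              (ENNReal.ofReal (4 * Real.pi) * volume J) ^ (1 / 2 : ℝ) +
                ENNReal.ofReal (ε * s) := by
  set β := min 1 (ε / 4)
  have hβ0 : 0 < β := lt_min one_pos (by positivity)
  have hβπ : β ≤ π / 2 := (min_le_left _ _).trans (by linarith [pi_gt_three])
  have hsin : 0 < sin β := sin_pos_of_pos_of_lt_pi hβ0 (by linarith [pi_pos])
  have hβε : 2 * sin β ^ 2 < ε := by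
    have : sin β ^ 2 ≤ β := by
      nlinarith [sin_le hβ0.le, min_le_left 1 (ε / 4)]
    linarith [min_le_right 1 (ε / 4)]
  refine ⟨π / sin β, β, div_pos pi_pos hsin, hβ0, fun α hα _ φ γ hγ s hs => ?_⟩
  obtain ⟨ψ, hψ, hγψ⟩ := exists_isometryEquiv_of_boundingRay hα φ hγ
  obtain ⟨T, J, hT, hTJ, hseg, hlen, hiso⟩ :=
    exists_capCurve_almost_isoperimetric hβ0 hβπ hβε hs
  obtain ⟨hJordan, hcomp, hbdd⟩ := hTJ.image ψ
  refine ⟨ψ '' T, ψ '' J, (image_mono hT).trans hψ, hJordan, hcomp, hbdd, ?_,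
    (setLoopLen_image_isometryEquiv_le ψ T).trans hlen, ?_⟩
  · rintro _ ⟨t, ht, rfl⟩
    rw [hγψ]
    exact mem_image_of_mem _ (hseg ⟨t, ht, rfl⟩)
  · rw [volume_image_isometryEquiv]
    exact (setLoopLen_image_isometryEquiv_le ψ T).trans_lt hiso

end IsoCat
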